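/- arXiv:2111.02221 — 8 statements merged into one kernel-verified Lean document; each statement's English description precedes it below -/
import Mathlib

section
/- If 0 → M → N → L → 0 is a pure exact sequence of R-modules and N is semi-regular flat, then both M and L are semi-regular flat. -/
open CategoryTheory

noncomputable section

/-- An ideal is semi-regular if it contains a finitely generated subideal
with zero annihilator. -/
def Ideal.IsSemiregular {R : Type} [CommRing R] (I : Ideal R) : Prop :=
  ∃ J : Ideal R, J ≤ I ∧ J.FG ∧ Submodule.annihilator J = ⊥

/-- A module is semi-regular flat if `Tor₁(R/I, M) = 0` for every finitely generated
semi-regular ideal `I`. -/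
def IsSemiregularFlat (R : Type) [CommRing R] (M : Type) [AddCommGroup M] [Module R M] : Prop :=
  ∀ I : Ideal R, I.FG → I.IsSemiregular →
    Limits.IsZero (((Tor (ModuleCat R) 1).obj (ModuleCat.of R (R ⧸ I))).obj (ModuleCat.of R M))

/-!
`Tor₁(R ⧸ I, X)` is the kernel of the multiplication map `I ⊗ X → X`: for a presentation
`0 → K → P₀ → X → 0` with `P₀` projective, `Tor₁(R ⧸ I, X) = ker (K / I K → P₀ / I P₀)`, and a
chase using that `I ⊗ P₀ → P₀` is injective identifies this with `ker (I ⊗ X → X)`.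
Purity makes `I ⊗ M → I ⊗ N` injective, so `I ⊗ M → M` is injective whenever `I ⊗ N → N` is.
Purity against `R ⧸ I` says `f⁻¹(I N) = I M`, and with this the same chase through the
right exact row `I ⊗ M → I ⊗ N → I ⊗ L → 0` shows that `I ⊗ L → L` is injective.
-/

open TensorProduct LinearMap

universe u

lemma Function.Exact.exact_comp_iff_injective {R : Type*} [Ring R] {M N P Q : Type*}
    [AddCommGroup M] [Module R M] [AddCommGroup N] [Module R N] [AddCommGroup P] [Module R P]
    [AddCommGroup Q] [Module R Q]
    {f : M →ₗ[R] N} {g : N →ₗ[R] P} (hfg : Function.Exact f g) (hg : Function.Surjective g)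
    (h : P →ₗ[R] Q) : Function.Exact f (h ∘ₗ g) ↔ Function.Injective h := by
  rw [LinearMap.exact_iff, ← hfg.linearMap_ker_eq, LinearMap.ker_comp, ← LinearMap.ker_eq_bot]
  exact (Submodule.comap_injective_of_surjective hg).eq_iff' (Submodule.comap_bot g)

variable {R : Type u} [CommRing R]

lemma exact_lTensor_iff_lTensor_rangeSubtype_injective (A : Type*) [AddCommGroup A]
    [Module R A] {M N P : Type*} [AddCommGroup M] [Module R M] [AddCommGroup N] [Module R N]
    [AddCommGroup P] [Module R P] {f : M →ₗ[R] N} {g : N →ₗ[R] P} (hfg : Function.Exact f g) :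
    Function.Exact (f.lTensor A) (g.lTensor A) ↔
      Function.Injective ((range g).subtype.lTensor A) := by
  have hf : Function.Exact f g.rangeRestrict := by
    rwa [LinearMap.exact_iff, LinearMap.ker_rangeRestrict, ← LinearMap.exact_iff]
  rw [← (lTensor_exact A hf g.surjective_rangeRestrict).exact_comp_iff_injective
    (lTensor_surjective A g.surjective_rangeRestrict), ← lTensor_comp]
  rfl

def Ideal.tensorSMul (I : Ideal R) (X : Type*) [AddCommGroup X] [Module R X] :
    I ⊗[R] X →ₗ[R] X :=
  TensorProduct.lift ((LinearMap.lsmul R X).comp I.subtype)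

namespace Ideal

variable (I : Ideal R) {X Y : Type*} [AddCommGroup X] [Module R X] [AddCommGroup Y] [Module R Y]

lemma range_tensorSMul : range (I.tensorSMul X) = I • ⊤ := by
  rw [Submodule.smul_eq_map₂, map₂_eq_range_lift_comp_mapIncl,
    ← (Submodule.topEquiv.lTensor I).range_comp]
  exact congr_arg _ (TensorProduct.ext' fun _ _ => rfl)

lemma tensorSMul_lTensor (φ : X →ₗ[R] Y) (t : I ⊗[R] X) :
    I.tensorSMul Y (φ.lTensor I t) = φ (I.tensorSMul X t) := by
  induction t with
  | zero => simp
  | tmul i x => simp [tensorSMul]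
  | add a b ha hb => simp only [map_add, ha, hb]

lemma tensorSMul_injective_of_flat [Module.Flat R X] : Function.Injective (I.tensorSMul X) := by
  have h : I.tensorSMul X = (TensorProduct.lid R X).toLinearMap ∘ₗ I.subtype.rTensor X :=
    TensorProduct.ext' fun _ _ => rfl
  rw [h]
  exact (TensorProduct.lid R X).injective.comp
    (Module.Flat.rTensor_preserves_injective_linearMap _ I.injective_subtype)

lemma lTensor_quotient_injective_iff (φ : X →ₗ[R] Y) :
    Function.Injective (φ.lTensor (R ⧸ I)) ↔ (I • ⊤ : Submodule R Y).comap φ ≤ I • ⊤ := by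
  have h : (quotTensorEquivQuotSMul Y I).toLinearMap ∘ₗ φ.lTensor (R ⧸ I) =
      Submodule.mapQ _ _ φ (Submodule.smul_top_le_comap_smul_top I φ) ∘ₗ
        (quotTensorEquivQuotSMul X I).toLinearMap := by
    refine TensorProduct.ext' fun r x => ?_
    obtain ⟨r, rfl⟩ := Ideal.Quotient.mk_surjective r
    simp
  rw [← (quotTensorEquivQuotSMul Y I).injective.of_comp_iff,
    show ⇑(quotTensorEquivQuotSMul Y I) ∘ ⇑(φ.lTensor (R ⧸ I)) =
      ⇑((quotTensorEquivQuotSMul Y I).toLinearMap ∘ₗ φ.lTensor (R ⧸ I)) from rfl, h,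
    LinearMap.coe_comp, LinearEquiv.coe_coe, EquivLike.injective_comp, ← LinearMap.ker_eq_bot,
    Submodule.ker_mapQ, ← le_bot_iff, Submodule.map_le_iff_le_comap, Submodule.comap_bot,
    Submodule.ker_mkQ]

variable {I}

lemma tensorSMul_injective_of_lTensor_injective {φ : X →ₗ[R] Y}
    (hφ : Function.Injective (φ.lTensor I)) (hY : Function.Injective (I.tensorSMul Y)) :
    Function.Injective (I.tensorSMul X) :=
  fun a b hab => hφ (hY (by rw [tensorSMul_lTensor, tensorSMul_lTensor, hab]))

variable {K : Type*} [AddCommGroup K] [Module R K] {ι : K →ₗ[R] X} {π : X →ₗ[R] Y}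

lemma tensorSMul_injective_of_exact (hιπ : Function.Exact ι π) (hπ : Function.Surjective π)
    (hX : Function.Injective (I.tensorSMul X)) (hK : (I • ⊤ : Submodule R X).comap ι ≤ I • ⊤) :
    Function.Injective (I.tensorSMul Y) := by
  rw [injective_iff_map_eq_zero]
  intro u hu
  obtain ⟨t, rfl⟩ := lTensor_surjective I hπ u
  obtain ⟨k, hk⟩ : I.tensorSMul X t ∈ range ι := by
    rw [← hιπ.linearMap_ker_eq, mem_ker, ← tensorSMul_lTensor, hu]
  obtain ⟨s, hs⟩ : k ∈ range (I.tensorSMul K) := by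
    rw [range_tensorSMul]
    apply hK
    rw [Submodule.mem_comap, hk, ← range_tensorSMul]
    exact mem_range_self _ _
  have ht : t = ι.lTensor I s := hX (by rw [tensorSMul_lTensor, hs, hk])
  rw [ht]
  exact (lTensor_exact I hιπ hπ).apply_apply_eq_zero s

lemma comap_smul_top_le_of_exact (hιπ : Function.Exact ι π) (hι : Function.Injective ι)
    (hπ : Function.Surjective π) (hY : Function.Injective (I.tensorSMul Y)) :
    (I • ⊤ : Submodule R X).comap ι ≤ I • ⊤ := by
  intro k hk
  obtain ⟨t, ht⟩ : ι k ∈ range (I.tensorSMul X) := by rwa [range_tensorSMul]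
  have : π.lTensor I t = 0 :=
    hY (by rw [tensorSMul_lTensor, ht, hιπ.apply_apply_eq_zero, map_zero])
  obtain ⟨s, rfl⟩ := (lTensor_exact I hιπ hπ t).mp this
  rw [← range_tensorSMul]
  exact ⟨s, hι (by rw [← tensorSMul_lTensor, ht])⟩

lemma lTensor_quotient_injective_iff_tensorSMul_injective [Module.Flat R X]
    (hιπ : Function.Exact ι π) (hι : Function.Injective ι) (hπ : Function.Surjective π) :
    Function.Injective (ι.lTensor (R ⧸ I)) ↔ Function.Injective (I.tensorSMul Y) := by
  rw [lTensor_quotient_injective_iff]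
  exact ⟨tensorSMul_injective_of_exact hιπ hπ (tensorSMul_injective_of_flat I),
    comap_smul_top_le_of_exact hιπ hι hπ⟩

end Ideal

section Tor

open Limits

lemma isZero_tor_one_iff_exact_lTensor (A : ModuleCat R) {X : ModuleCat R}
    (P : ProjectiveResolution X) :
    IsZero (((Tor (ModuleCat R) 1).obj A).obj X) ↔
      Function.Exact ((P.complex.d 2 1).hom.lTensor A) ((P.complex.d 1 0).hom.lTensor A) := by
  rw [Tor_obj, (P.isoLeftDerivedObj _ 1).isZero_iff, HomologicalComplex.homologyFunctor_obj,
    ← HomologicalComplex.exactAt_iff_isZero_homology,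
    HomologicalComplex.exactAt_iff' _ 2 1 0 (by simp) (by simp),
    ShortComplex.moduleCat_exact_iff_range_eq_ker, LinearMap.exact_iff, eq_comm]
  rfl

lemma CategoryTheory.ProjectiveResolution.exact_d_two_one {X : ModuleCat R}
    (P : ProjectiveResolution X) :
    Function.Exact (P.complex.d 2 1).hom (P.complex.d 1 0).hom := by
  rw [LinearMap.exact_iff, eq_comm]
  exact (ShortComplex.moduleCat_exact_iff_range_eq_ker _).mp (P.exact_succ 0)

lemma CategoryTheory.ProjectiveResolution.exact_d_one_zero {X : ModuleCat R}
    (P : ProjectiveResolution X) :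
    Function.Exact (P.complex.d 1 0).hom (P.π.f 0).hom := by
  rw [LinearMap.exact_iff, eq_comm]
  exact (ShortComplex.moduleCat_exact_iff_range_eq_ker _).mp P.exact₀

lemma isZero_tor_one_quotient_iff (I : Ideal R) (X : Type u) [AddCommGroup X] [Module R X] :
    IsZero (((Tor (ModuleCat R) 1).obj (ModuleCat.of R (R ⧸ I))).obj (ModuleCat.of R X)) ↔
      Function.Injective (I.tensorSMul X) := by
  obtain ⟨P⟩ := HasProjectiveResolution.out (Z := ModuleCat.of R X)
  have : Module.Projective R (P.complex.X 0) :=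
    (IsProjective.iff_projective (P := ↥(P.complex.X 0))).mpr
      (inferInstanceAs (Projective (P.complex.X 0)))
  have hιπ : Function.Exact (range (P.complex.d 1 0).hom).subtype (P.π.f 0).hom := by
    rw [LinearMap.exact_iff, Submodule.range_subtype, P.exact_d_one_zero.linearMap_ker_eq]
  rw [isZero_tor_one_iff_exact_lTensor _ P,
    exact_lTensor_iff_lTensor_rangeSubtype_injective _ P.exact_d_two_one]
  exact Ideal.lTensor_quotient_injective_iff_tensorSMul_injective hιπ
    (Submodule.injective_subtype _) ((ModuleCat.epi_iff_surjective _).mp inferInstance)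

end Tor

theorem isSemiregularFlat_of_pure_general (R : Type) [CommRing R]
    (M N L : Type) [AddCommGroup M] [Module R M] [AddCommGroup N] [Module R N]
    [AddCommGroup L] [Module R L]
    (f : M →ₗ[R] N) (g : N →ₗ[R] L)
    (hg : Function.Surjective g)
    (hfg : Function.Exact f g)
    (hpure : ∀ (P : Type) (_ : AddCommGroup P) (_ : Module R P),
      Function.Injective (LinearMap.rTensor P f))
    (hN : IsSemiregularFlat R N) :
    IsSemiregularFlat R M ∧ IsSemiregularFlat R L := by
  have hlTensor (P : Type) [AddCommGroup P] [Module R P] : Function.Injective (f.lTensor P) :=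
    (lTensor_inj_iff_rTensor_inj P f).mpr (hpure P _ _)
  have hN' (I : Ideal R) (hI : I.FG) (hIs : I.IsSemiregular) :
      Function.Injective (I.tensorSMul N) :=
    (isZero_tor_one_quotient_iff I N).mp (hN I hI hIs)
  refine ⟨fun I hI hIs => ?_, fun I hI hIs => ?_⟩ <;> rw [isZero_tor_one_quotient_iff]
  · exact Ideal.tensorSMul_injective_of_lTensor_injective (hlTensor I) (hN' I hI hIs)
  · exact Ideal.tensorSMul_injective_of_exact hfg hg (hN' I hI hIs)
      ((Ideal.lTensor_quotient_injective_iff I f).mp (hlTensor (R ⧸ I)))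

/-- If `0 → M → N → L → 0` is a pure exact sequence and `N` is semi-regular flat,
then so are `M` and `L`. -/
theorem isSemiregularFlat_of_pure (R : Type) [CommRing R]
    (M N L : Type) [AddCommGroup M] [Module R M] [AddCommGroup N] [Module R N]
    [AddCommGroup L] [Module R L]
    (f : M →ₗ[R] N) (g : N →ₗ[R] L)
    (hf : Function.Injective f) (hg : Function.Surjective g)
    (hfg : Function.Exact f g)
    (hpure : ∀ (P : Type) (_ : AddCommGroup P) (_ : Module R P),
      Function.Injective (LinearMap.rTensor P f))
    (hN : IsSemiregularFlat R N) :
    IsSemiregularFlat R M ∧ IsSemiregularFlat R L :=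
  isSemiregularFlat_of_pure_general R M N L f g hg hfg hpure hN

end
end

section
/- A commutative ring R is a DQ ring (i.e., the only finitely generated semi-regular ideal of R is R itself) if and only if every R-module is semi-regular flat. -/
open CategoryTheory

noncomputable section

/-!
If `R` is a DQ ring, a finitely generated semi-regular ideal `I` is `R` itself, and
`Tor₁(R/I, M) = Tor₁(0, M) = 0`. Conversely, let `J = (x₁, …, xₙ) ⊆ I` with `(0 :_R J) = 0`.
Then `r ↦ (r xᵢ)ᵢ` is injective, so `0 → R → Rⁿ → M → 0` is a projective resolution of its
cokernel `M`. Since every `xᵢ` lies in `I`, this map dies after tensoring with `R/I`, whence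
`Tor₁(R/I, M) ≅ R/I ⊗ R ≅ R/I`; so semi-regular flatness of `M` forces `I = R`.
-/

open Limits MonoidalCategory ZeroObject

namespace CategoryTheory

variable {C : Type*} [Category C] [Abelian C]

lemma Functor.isZero_leftDerived_obj_of_isZero {D : Type*} [Category D] [Abelian D]
    [HasProjectiveResolutions C] (F : C ⥤ D) [F.Additive] (hF : ∀ X, IsZero (F.obj X))
    (n : ℕ) (X : C) : IsZero ((F.leftDerived n).obj X) :=
  (ShortComplex.isZero_homology_of_isZero_X₂
    (((F.mapHomologicalComplex _).obj (projectiveResolution X).complex).sc n) (hF _)).of_iso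
    ((projectiveResolution X).isoLeftDerivedObj F n)

lemma isZero_Tor_of_isZero_left [MonoidalCategory C] [MonoidalPreadditive C]
    [HasProjectiveResolutions C] {X : C} (hX : IsZero X) (n : ℕ) (Y : C) :
    IsZero (((Tor C n).obj X).obj Y) :=
  Functor.isZero_leftDerived_obj_of_isZero _ (fun Z => by
    change IsZero (X ⊗ Z)
    rw [IsZero.iff_id_eq_zero, ← id_whiskerRight, hX.eq_of_src (𝟙 X) 0,
      MonoidalPreadditive.zero_whiskerRight]) n Y

namespace ProjectiveResolution

def twoTermX (S : ShortComplex C) : ℕ → C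
  | 0 => S.X₂
  | 1 => S.X₁
  | _ + 2 => 0

def twoTermD (S : ShortComplex C) : ∀ n, twoTermX S (n + 1) ⟶ twoTermX S n
  | 0 => S.f
  | _ + 1 => 0

def twoTermComplex (S : ShortComplex C) : ChainComplex C ℕ :=
  ChainComplex.of (twoTermX S) (twoTermD S) fun _ => zero_comp

@[simp] lemma twoTermComplex_d_one_zero (S : ShortComplex C) :
    (twoTermComplex S).d 1 0 = S.f :=
  ChainComplex.of_d (twoTermX S) (twoTermD S) 0

@[simp] lemma twoTermComplex_d_succ_succ (S : ShortComplex C) (n : ℕ) :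
    (twoTermComplex S).d (n + 2) (n + 1) = 0 :=
  ChainComplex.of_d (twoTermX S) (twoTermD S) (n + 1)

lemma isZero_twoTermComplex_X_add_two (S : ShortComplex C) (n : ℕ) :
    IsZero ((twoTermComplex S).X (n + 2)) :=
  isZero_zero C

lemma twoTermComplex_exactAt_succ {S : ShortComplex C} (hS : S.ShortExact) (n : ℕ) :
    (twoTermComplex S).ExactAt (n + 1) := by
  rw [HomologicalComplex.exactAt_iff' _ (n + 2) (n + 1) n (by simp) (by simp)]
  cases n with
  | zero =>
    rw [ShortComplex.exact_iff_mono _ (twoTermComplex_d_succ_succ S 0)]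
    change Mono ((twoTermComplex S).d 1 0)
    rw [twoTermComplex_d_one_zero]
    exact hS.mono_f
  | succ n => exact ShortComplex.exact_of_isZero_X₂ _ (isZero_twoTermComplex_X_add_two S n)

def ofShortExact {S : ShortComplex C} (hS : S.ShortExact) [Projective S.X₁]
    [Projective S.X₂] : ProjectiveResolution S.X₃ where
  complex := twoTermComplex S
  projective
    | 0 => inferInstanceAs (Projective S.X₂)
    | 1 => inferInstanceAs (Projective S.X₁)
    | n + 2 => (isZero_twoTermComplex_X_add_two S n).projective
  π := (ChainComplex.toSingle₀Equiv _ _).symm ⟨S.g, by rw [twoTermComplex_d_one_zero]; exact S.zero⟩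
  quasiIso := ⟨fun n => by
    cases n with
    | zero =>
      rw [ChainComplex.quasiIsoAt₀_iff, ShortComplex.quasiIso_iff_of_zeros']
      · refine (ShortComplex.exact_and_epi_g_iff_of_iso ?_).2 ⟨hS.exact, hS.epi_g⟩
        -- `erw`: the objects of `twoTermComplex S` are those of `S` only after unfolding
        refine ShortComplex.isoMk (Iso.refl _) (Iso.refl _) (Iso.refl _) ?_ ?_ <;>
          erw [Category.id_comp, Category.comp_id]
        · exact (twoTermComplex_d_one_zero S).symm
        · exact (ChainComplex.toSingle₀Equiv_symm_apply_f_zero (C := twoTermComplex S) S.g _).symm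
      all_goals rfl
    | succ n =>
      rw [quasiIsoAt_iff_exactAt']
      · exact twoTermComplex_exactAt_succ hS n
      · exact ChainComplex.exactAt_succ_single_obj _ _⟩

end ProjectiveResolution

lemma ShortComplex.ShortExact.isZero_obj_X₁_of_isZero_leftDerived_one {D : Type*} [Category D]
    [Abelian D] [HasProjectiveResolutions C] {S : ShortComplex C} (hS : S.ShortExact)
    [Projective S.X₁] [Projective S.X₂] (F : C ⥤ D) [F.Additive] (hF : F.map S.f = 0)
    (h : IsZero ((F.leftDerived 1).obj S.X₃)) :
    IsZero (F.obj S.X₁) := by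
  set P := ProjectiveResolution.ofShortExact hS
  have hK : ((F.mapHomologicalComplex _).obj P.complex).ExactAt 1 :=
    (HomologicalComplex.exactAt_iff_isZero_homology _ _).2 (h.of_iso (P.isoLeftDerivedObj F 1).symm)
  rw [HomologicalComplex.exactAt_iff' _ 2 1 0 (by simp) (by simp)] at hK
  refine hK.isZero_X₂ ?_ ?_
  · exact (congrArg F.map (ProjectiveResolution.twoTermComplex_d_succ_succ S 0)).trans
      (F.map_zero _ _)
  · exact (congrArg F.map (ProjectiveResolution.twoTermComplex_d_one_zero S)).trans hF

end CategoryTheory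

section Modules

open TensorProduct Submodule

variable {R : Type*} [CommRing R]

lemma TensorProduct.quotient_tmul_eq_zero_of_mem_smul_top {N : Type*} [AddCommGroup N]
    [Module R N] (I : Ideal R) (q : R ⧸ I) {n : N} (hn : n ∈ I • (⊤ : Submodule R N)) :
    q ⊗ₜ[R] n = 0 := by
  obtain ⟨r, rfl⟩ := Ideal.Quotient.mk_surjective q
  apply (quotTensorEquivQuotSMul N I).injective
  rw [quotTensorEquivQuotSMul_mk_tmul, map_zero, Submodule.Quotient.mk_eq_zero]
  exact Submodule.smul_of_tower_mem _ r hn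

lemma LinearMap.lTensor_quotient_eq_zero {M N : Type*} [AddCommGroup M] [Module R M]
    [AddCommGroup N] [Module R N] (I : Ideal R) {f : M →ₗ[R] N}
    (hf : LinearMap.range f ≤ I • ⊤) : f.lTensor (R ⧸ I) = 0 :=
  TensorProduct.ext' fun q m => by
    rw [LinearMap.lTensor_tmul, LinearMap.zero_apply]
    exact quotient_tmul_eq_zero_of_mem_smul_top I q (hf ⟨m, rfl⟩)

lemma Submodule.mem_smul_top_pi_of_forall_mem {ι : Type*} [Fintype ι] {I : Ideal R} {x : ι → R}
    (hx : ∀ i, x i ∈ I) : x ∈ I • (⊤ : Submodule R (ι → R)) := by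
  classical
  rw [pi_eq_sum_univ x]
  exact Submodule.sum_mem _ fun i _ => Submodule.smul_mem_smul (hx i) trivial

lemma LinearMap.ker_toSpanSingleton_pi {ι : Type*} (x : ι → R) :
    LinearMap.ker (LinearMap.toSpanSingleton R (ι → R) x) = (span R (Set.range x)).annihilator := by
  refine Submodule.ext fun r => ?_
  simp [mem_annihilator_span, funext_iff]

end Modules

open TensorProduct in
lemma Ideal.eq_top_of_isZero_Tor_one {R : Type} [CommRing R] (I : Ideal R) {ι : Type}
    [Fintype ι] (x : ι → R) (hxI : ∀ i, x i ∈ I)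
    (hx : (Submodule.span R (Set.range x)).annihilator = ⊥)
    (h : IsZero (((Tor (ModuleCat R) 1).obj (ModuleCat.of R (R ⧸ I))).obj
      (ModuleCat.of R ((ι → R) ⧸ LinearMap.range (LinearMap.toSpanSingleton R (ι → R) x))))) :
    I = ⊤ := by
  set f := LinearMap.toSpanSingleton R (ι → R) x
  let S := ShortComplex.mk (ModuleCat.ofHom f) (ModuleCat.ofHom (LinearMap.range f).mkQ)
    (by ext; simp)
  have hS : S.ShortExact := ModuleCat.shortComplex_shortExact S (LinearMap.exact_map_mkQ_range f)
    (by rw [← LinearMap.ker_eq_bot]; exact (LinearMap.ker_toSpanSingleton_pi x).trans hx)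
    (Submodule.mkQ_surjective _)
  have hF : ((tensoringLeft _).obj (ModuleCat.of R (R ⧸ I))).map S.f = 0 := by
    refine ModuleCat.hom_ext (LinearMap.lTensor_quotient_eq_zero I ?_)
    rintro _ ⟨r, rfl⟩
    exact Submodule.smul_of_tower_mem _ r (Submodule.mem_smul_top_pi_of_forall_mem hxI)
  have hR : Subsingleton ((R ⧸ I) ⊗[R] R) := ModuleCat.isZero_iff_subsingleton.1
    (hS.isZero_obj_X₁_of_isZero_leftDerived_one _ hF h)
  exact Ideal.Quotient.subsingleton_iff.1 (TensorProduct.rid R (R ⧸ I)).symm.injective.subsingleton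

/-- `R` is a DQ ring (its only finitely generated semi-regular ideal is `R`)
iff every `R`-module is semi-regular flat. -/
theorem isDQ_iff_all_semiregularFlat (R : Type) [CommRing R] :
    (∀ I : Ideal R, I.FG → I.IsSemiregular → I = ⊤) ↔
      ∀ (M : Type) (_ : AddCommGroup M) (_ : Module R M), IsSemiregularFlat R M := by
  refine ⟨fun hDQ M _ _ I hI hsr => ?_, fun hflat I hI hsr => ?_⟩
  · rw [hDQ I hI hsr]
    have : Subsingleton (R ⧸ (⊤ : Ideal R)) := Ideal.Quotient.subsingleton_iff.2 rfl
    exact isZero_Tor_of_isZero_left (ModuleCat.isZero_of_subsingleton _) 1 _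
  · obtain ⟨J, hJI, ⟨s, rfl⟩, hann⟩ := hsr
    exact Ideal.eq_top_of_isZero_Tor_one I (Subtype.val : ↥(s : Set R) → R)
      (fun i => hJI (Submodule.subset_span i.2)) (by rwa [Subtype.range_coe])
      (hflat _ _ _ I hI ⟨_, hJI, ⟨s, rfl⟩, hann⟩)

end
end

section
/- A commutative ring R is a DQ ring if and only if for every finitely generated semi-regular ideal I and every finitely generated ideal J of R, one has I ∩ J = IJ. -/
/-- `R` is a DQ ring iff `I ⊓ J = I * J` for every finitely generated semi-regular
ideal `I` and every finitely generated ideal `J`. -/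
theorem isDQ_iff_inf_eq_mul (R : Type) [CommRing R] :
    (∀ I : Ideal R, I.FG → I.IsSemiregular → I = ⊤) ↔
      ∀ I J : Ideal R, I.FG → I.IsSemiregular → J.FG → I ⊓ J = I * J := by
  constructor
  · intro h I J hIfg hIsr _
    rw [h I hIfg hIsr, top_inf_eq, Ideal.top_mul]
  · intro h I hIfg hIsr
    have hsq : I ⊓ I = I * I := h I I hIfg hIsr hIfg
    rw [inf_idem] at hsq
    -- I ≤ I • I
    have hle : I ≤ I • (I : Submodule R R) := by
      rw [smul_eq_mul, ← hsq]
    obtain ⟨r, hrI, hr⟩ := Submodule.exists_mem_and_smul_eq_self_of_fg_of_le_smul I I hIfg hle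
    -- annihilator of I is ⊥
    obtain ⟨J, hJI, _, hJann⟩ := hIsr
    have hannI : Submodule.annihilator (I : Submodule R R) = ⊥ := by
      rw [← le_bot_iff, ← hJann]
      exact Submodule.annihilator_mono hJI
    have : (1 - r) ∈ Submodule.annihilator (I : Submodule R R) := by
      rw [Submodule.mem_annihilator]
      intro x hx
      have := hr x hx
      simp only [smul_eq_mul] at this ⊢
      rw [sub_mul, one_mul, this, sub_self]
    rw [hannI, Submodule.mem_bot, sub_eq_zero] at this
    rw [← this] at hrI
    exact Ideal.eq_top_of_isUnit_mem I hrI isUnit_one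
end

section
/- A commutative ring R is a DQ ring if and only if for every finitely generated semi-regular ideal I and every a ∈ I, there exists c ∈ I with (1 - c)a = 0. -/
/-- `R` is a DQ ring iff for every finitely generated semi-regular ideal `I` and
every `a ∈ I`, there exists `c ∈ I` with `(1 - c) * a = 0`. -/
theorem isDQ_iff_exists_quasi_idempotent (R : Type) [CommRing R] :
    (∀ I : Ideal R, I.FG → I.IsSemiregular → I = ⊤) ↔
      ∀ I : Ideal R, I.FG → I.IsSemiregular →
        ∀ a ∈ I, ∃ c ∈ I, (1 - c) * a = 0 := by
  constructor
  · intro h I hfg hsr a ha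
    have := h I hfg hsr
    exact ⟨1, this ▸ Submodule.mem_top, by ring⟩
  · intro h I hfg hsr
    obtain ⟨J, hJI, hJfg, hJann⟩ := hsr
    have hJsr : J.IsSemiregular := ⟨J, le_rfl, hJfg, hJann⟩
    have hJ := h J hJfg hJsr
    obtain ⟨s, hs⟩ := hJfg
    -- find c ∈ J killing all of s
    have key : ∀ t : Finset R, (↑t : Set R) ⊆ J → ∃ c ∈ J, ∀ a ∈ t, (1 - c) * a = 0 := by
      classical
      intro t ht
      induction t using Finset.induction_on with
      | empty => exact ⟨0, J.zero_mem, by simp⟩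
      | @insert x t hx ih =>
        obtain ⟨c, hc, hck⟩ := ih (fun a ha => ht (Finset.mem_insert_of_mem ha))
        have hxJ : x ∈ J := ht (Finset.mem_insert_self x t)
        obtain ⟨d, hd, hdk⟩ := hJ x hxJ
        refine ⟨c + d - c * d, ?_, ?_⟩
        · exact J.sub_mem (J.add_mem hc hd) (J.mul_mem_right d hc)
        · intro a ha
          rcases Finset.mem_insert.mp ha with rfl | ha
          · have : (1 - (c + d - c * d)) * a = (1 - c) * ((1 - d) * a) := by ring
            rw [this, hdk, mul_zero]
          · have : (1 - (c + d - c * d)) * a = (1 - d) * ((1 - c) * a) := by ring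
            rw [this, hck a ha, mul_zero]
    have hsJ : (↑s : Set R) ⊆ J := by rw [← hs]; exact Ideal.subset_span
    obtain ⟨c, hc, hck⟩ := key s hsJ
    have hann : (1 - c) ∈ Submodule.annihilator J := by
      rw [Submodule.mem_annihilator]
      intro m hm
      rw [← hs] at hm
      induction hm using Submodule.span_induction with
      | mem y hy => exact hck y hy
      | zero => simp
      | add y z _ _ hy hz => rw [smul_add, hy, hz, add_zero]
      | smul r y _ hy =>
        rw [smul_comm, hy, smul_zero]
    rw [hJann, Submodule.mem_bot, sub_eq_zero] at hann
    rw [Ideal.eq_top_iff_one]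
    exact hJI (hann ▸ hc)
end

section
/- If every finitely generated semi-regular ideal I of a commutative ring R satisfies that R/I is a projective R-module, then R is a DQ ring. -/
/-- If `R/I` is projective for every finitely generated semi-regular ideal `I`,
then `R` is a DQ ring. -/
theorem isDQ_of_quotient_projective (R : Type) [CommRing R]
    (h : ∀ I : Ideal R, I.FG → I.IsSemiregular → Module.Projective R (R ⧸ I)) :
    ∀ I : Ideal R, I.FG → I.IsSemiregular → I = ⊤ := by
  intro I hfg hsr
  obtain ⟨J, hJI, hJfg, hJann⟩ := hsr
  have hproj := h I hfg ⟨J, hJI, hJfg, hJann⟩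
  obtain ⟨s, hs⟩ := Module.projective_lifting_property I.mkQ
    (LinearMap.id : R ⧸ I →ₗ[R] R ⧸ I) (Submodule.mkQ_surjective I)
  set c : R := s (Submodule.Quotient.mk 1) with hc
  -- c • j = 0 for all j ∈ I
  have hcI : ∀ x ∈ I, x * c = 0 := by
    intro x hx
    have : s (Submodule.Quotient.mk x) = x • c := by
      rw [hc, ← LinearMap.map_smul]
      congr 1
      rw [← Submodule.Quotient.mk_smul]
      simp
    have hx0 : (Submodule.Quotient.mk x : R ⧸ I) = 0 :=
      (Submodule.Quotient.mk_eq_zero I).mpr hx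
    rw [hx0, map_zero] at this
    simpa [smul_eq_mul] using this.symm
  have hc0 : c = 0 := by
    have : c ∈ Submodule.annihilator J := by
      rw [Submodule.mem_annihilator]
      intro j hj
      rw [smul_eq_mul, mul_comm]
      exact hcI j (hJI hj)
    rwa [hJann, Submodule.mem_bot] at this
  -- 1 - c ∈ I
  have h1c : (1 : R) - c ∈ I := by
    rw [← Submodule.Quotient.mk_eq_zero, Submodule.Quotient.mk_sub]
    have := congrArg (fun f => f ((Submodule.Quotient.mk 1 : R ⧸ I))) hs
    simp only [LinearMap.comp_apply, LinearMap.id_apply, Submodule.mkQ_apply] at this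
    rw [hc, this, sub_self]
  rw [Ideal.eq_top_iff_one]
  simpa [hc0] using h1c
end

section
/- Let R be a commutative ring in which every finitely generated semi-regular ideal is flat. Then every submodule of a semi-regular flat R-module is semi-regular flat. -/
/-!
`Tor₁(R/I, X)` is the kernel of `I ⊗ X → X`: computing `Tor₁` from a projective resolution of
`X` and from `0 → I → R → R/I → 0` gives the same answer, by a chase in the square of tensor
products of these two sequences. If `I` is flat, `I ⊗ N → I ⊗ M` is injective; composed with the
injective `I ⊗ M → M` it shows that `I ⊗ N → N` is injective.
-/

open CategoryTheory

noncomputable section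

namespace LinearMap

open Function TensorProduct

section

variable {R : Type*} [CommRing R] {M N P P' : Type*} [AddCommGroup M] [Module R M]
  [AddCommGroup N] [Module R N] [AddCommGroup P] [Module R P] [AddCommGroup P'] [Module R P']

lemma exact_comp_iff_injective {f : M →ₗ[R] N} {g : N →ₗ[R] P} {h : P →ₗ[R] P'}
    (hfg : Exact f g) (hg : Surjective g) : Exact f (h ∘ₗ g) ↔ Injective h := by
  rw [exact_iff, ← hfg.linearMap_ker_eq, ker_comp, ← ker_eq_bot]
  exact (Submodule.comap_injective_of_surjective hg).eq_iff

lemma rTensor_lTensor_comm_apply (f : M →ₗ[R] N) (g : P →ₗ[R] P') (x : M ⊗[R] P) :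
    f.rTensor P' (g.lTensor M x) = g.lTensor N (f.rTensor P x) := by
  rw [← comp_apply, rTensor_comp_lTensor, ← lTensor_comp_rTensor, comp_apply]

variable (A : Type*) [AddCommGroup A] [Module R A] {P₂ : Type*} [AddCommGroup P₂] [Module R P₂]

lemma exact_lTensor_iff_injective_lTensor_subtype_range {d₂ : P₂ →ₗ[R] M} {d₁ : M →ₗ[R] N}
    (hd : Exact d₂ d₁) :
    Exact (d₂.lTensor A) (d₁.lTensor A) ↔ Injective ((range d₁).subtype.lTensor A) := by
  have hd' : Exact d₂ d₁.rangeRestrict := (Submodule.injective_subtype _).comp_exact_iff_exact.mp hd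
  rw [show d₁.lTensor A = (range d₁).subtype.lTensor A ∘ₗ d₁.rangeRestrict.lTensor A by
    rw [← lTensor_comp]; rfl]
  exact exact_comp_iff_injective (lTensor_exact A hd' d₁.surjective_rangeRestrict)
    (lTensor_surjective A d₁.surjective_rangeRestrict)

end

variable {R : Type*} [CommRing R] {I F Q K P X : Type*} [AddCommGroup I] [Module R I]
  [AddCommGroup F] [Module R F] [AddCommGroup Q] [Module R Q] [AddCommGroup K] [Module R K]
  [AddCommGroup P] [Module R P] [AddCommGroup X] [Module R X]
  {f : I →ₗ[R] F} {g : F →ₗ[R] Q} {i : K →ₗ[R] P} {p : P →ₗ[R] X}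

/-- When `F` and `P` are flat, both sides say that `Tor₁(Q, X)` vanishes: the left one computed from
`0 → K → P → X → 0`, the right one from `0 → I → F → Q → 0`. -/
lemma injective_lTensor_iff_injective_rTensor (hfg : Exact f g) (hg : Surjective g)
    (hip : Exact i p) (hp : Surjective p)
    (hfP : Injective (f.rTensor P)) (hiF : Injective (i.lTensor F)) :
    Injective (i.lTensor Q) ↔ Injective (f.rTensor X) := by
  have exactI := lTensor_exact I hip hp
  have exactF := lTensor_exact F hip hp
  have exactK := rTensor_exact K hfg hg
  have exactP := rTensor_exact P hfg hg
  constructor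
  · intro hiQ
    refine (injective_iff_map_eq_zero _).mpr fun t ht ↦ ?_
    obtain ⟨s, rfl⟩ := lTensor_surjective I hp t
    obtain ⟨k, hk⟩ : ∃ k, i.lTensor F k = f.rTensor P s :=
      (exactF _).mp (by rw [← rTensor_lTensor_comm_apply, ht])
    obtain ⟨w, rfl⟩ : ∃ w, f.rTensor K w = k := (exactK k).mp <|
      (injective_iff_map_eq_zero _).mp hiQ _ <| by
        rw [← rTensor_lTensor_comm_apply, hk, exactP.apply_apply_eq_zero]
    have hs : i.lTensor I w = s := hfP (by rw [rTensor_lTensor_comm_apply, hk])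
    rw [← hs, exactI.apply_apply_eq_zero]
  · intro hfX
    refine (injective_iff_map_eq_zero _).mpr fun t ht ↦ ?_
    obtain ⟨k, rfl⟩ := rTensor_surjective K hg t
    obtain ⟨s, hs⟩ : ∃ s, f.rTensor P s = i.lTensor F k :=
      (exactP _).mp (by rw [rTensor_lTensor_comm_apply, ht])
    obtain ⟨w, rfl⟩ : ∃ w, i.lTensor I w = s := (exactI s).mp <|
      (injective_iff_map_eq_zero _).mp hfX _ <| by
        rw [rTensor_lTensor_comm_apply, hs, exactF.apply_apply_eq_zero]
    have hk : f.rTensor K w = k := hiF (by rw [← rTensor_lTensor_comm_apply, hs])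
    rw [← hk, exactK.apply_apply_eq_zero]

end LinearMap

open Function LinearMap

lemma isZero_tor_one_iff_injective_rTensor {R : Type} [CommRing R] {I F Q : Type}
    [AddCommGroup I] [Module R I] [AddCommGroup F] [Module R F] [Module.Flat R F]
    [AddCommGroup Q] [Module R Q] {f : I →ₗ[R] F} {g : F →ₗ[R] Q}
    (hf : Injective f) (hfg : Exact f g) (hg : Surjective g)
    (X : Type) [AddCommGroup X] [Module R X] :
    Limits.IsZero (((Tor (ModuleCat R) 1).obj (ModuleCat.of R Q)).obj (ModuleCat.of R X)) ↔
      Injective (f.rTensor X) := by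
  let P := ProjectiveResolution.of (ModuleCat.of R X)
  have exact₂₁ : Exact (P.complex.d 2 1).hom (P.complex.d 1 0).hom :=
    (ShortComplex.ShortExact.moduleCat_exact_iff_function_exact _).mp (P.exact_succ 0)
  let π : P.complex.X 0 →ₗ[R] X := (P.π.f 0).hom
  have exact₁₀ : Exact (P.complex.d 1 0).hom π :=
    (ShortComplex.ShortExact.moduleCat_exact_iff_function_exact _).mp
      (ShortComplex.exact_of_g_is_cokernel
        (ShortComplex.mk _ _ P.complex_d_comp_π_f_zero) P.isColimitCokernelCofork)
  have surjective_π : Surjective π := (ModuleCat.epi_iff_surjective _).mp inferInstance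
  have : Module.Projective R (P.complex.X 0) :=
    (IsProjective.iff_projective _).mpr (P.projective 0)
  refine (P.isoLeftDerivedObj ((MonoidalCategory.tensoringLeft _).obj (.of R Q)) 1
    ).isZero_iff.trans ?_
  rw [HomologicalComplex.homologyFunctor_obj, ← HomologicalComplex.exactAt_iff_isZero_homology,
    HomologicalComplex.exactAt_iff' _ 2 1 0 (by simp) (by simp),
    ShortComplex.ShortExact.moduleCat_exact_iff_function_exact]
  refine (exact_lTensor_iff_injective_lTensor_subtype_range Q exact₂₁).trans ?_
  refine injective_lTensor_iff_injective_rTensor hfg hg ?_ surjective_π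
    (Module.Flat.rTensor_preserves_injective_linearMap f hf)
    (Module.Flat.lTensor_preserves_injective_linearMap _ (Submodule.injective_subtype _))
  rw [exact_iff, Submodule.range_subtype, exact₁₀.linearMap_ker_eq]

/-- If every finitely generated semi-regular ideal of `R` is flat, then every
submodule of a semi-regular flat module is semi-regular flat. -/
theorem isSemiregularFlat_submodule (R : Type) [CommRing R]
    (h : ∀ I : Ideal R, I.FG → I.IsSemiregular → Module.Flat R I)
    (M : Type) [AddCommGroup M] [Module R M] (hM : IsSemiregularFlat R M)
    (N : Submodule R M) :
    IsSemiregularFlat R N := by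
  intro I hfg hsr
  have : Module.Flat R I := h I hfg hsr
  have tor_iff := isZero_tor_one_iff_injective_rTensor (Submodule.injective_subtype I)
    (exact_subtype_mkQ I) (Submodule.mkQ_surjective I)
  have injective_M : Injective (I.subtype.rTensor M) := (tor_iff M).mp (hM I hfg hsr)
  have injective_lTensor : Injective (N.subtype.lTensor I) :=
    Module.Flat.lTensor_preserves_injective_linearMap _ (Submodule.injective_subtype N)
  rw [tor_iff]
  refine Injective.of_comp (f := N.subtype.lTensor R) ?_
  simpa only [comp_def, rTensor_lTensor_comm_apply] using injective_M.comp injective_lTensor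

end
end

section
/- A commutative ring R is a strong Prüfer ring (every finitely generated semi-regular ideal is locally principal) if and only if every finitely generated semi-regular ideal of R is flat. -/
section

variable {R : Type*} [CommRing R]

theorem Submonoid.exists_mul_eq_zero_of_finset {ι : Type*} (M : Submonoid R) (T : Finset ι)
    (x : ι → R) (h : ∀ i ∈ T, ∃ c : M, (c : R) * x i = 0) :
    ∃ c : M, ∀ i ∈ T, (c : R) * x i = 0 := by
  classical
  induction T using Finset.induction_on with
  | empty => exact ⟨1, by simp⟩
  | insert b T _ ih =>
    obtain ⟨c, hc⟩ := ih fun i hi ↦ h i (Finset.mem_insert_of_mem hi)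
    obtain ⟨d, hd⟩ := h b (Finset.mem_insert_self b T)
    refine ⟨d * c, fun i hi ↦ ?_⟩
    rcases Finset.mem_insert.mp hi with rfl | hi
    · rw [Submonoid.coe_mul, mul_right_comm, hd, zero_mul]
    · rw [Submonoid.coe_mul, mul_assoc, hc i hi, mul_zero]

theorem Ideal.annihilator_map_eq_bot_of_fg (M : Submonoid R) (S : Type*) [CommRing S]
    [Algebra R S] [IsLocalization M S] {J : Ideal R} (hJ : J.FG)
    (h : J.annihilator = ⊥) : (J.map (algebraMap R S)).annihilator = ⊥ := by
  obtain ⟨T, rfl⟩ := hJ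
  refine (Submodule.eq_bot_iff _).mpr fun s hs ↦ ?_
  obtain ⟨r, t, rfl⟩ := IsLocalization.exists_mk'_eq M s
  rw [Ideal.map_span, Submodule.mem_annihilator_span] at hs
  have hkill : ∀ a ∈ T, ∃ c : M, (c : R) * (r * a) = 0 := fun a ha ↦ by
    rw [← IsLocalization.mk'_eq_zero_iff (S := S) _ t, mul_comm,
      ← IsLocalization.mul_mk'_eq_mk'_of_mul, mul_comm]
    exact hs ⟨_, a, ha, rfl⟩
  obtain ⟨c, hc⟩ := M.exists_mul_eq_zero_of_finset T _ hkill
  have hcr : (c : R) * r ∈ (Ideal.span (T : Set R)).annihilator :=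
    (Submodule.mem_annihilator_span _ _).mpr fun a ↦ by
      rw [smul_eq_mul, mul_assoc]; exact hc a a.2
  rw [h, Submodule.mem_bot] at hcr
  exact (IsLocalization.mk'_eq_zero_iff r t).mpr ⟨c, hcr⟩

theorem Ideal.free_of_isPrincipal_of_annihilator_eq_bot {I : Ideal R} (hI : I.IsPrincipal)
    (h : I.annihilator = ⊥) : Module.Free R I := by
  obtain ⟨g, rfl⟩ := hI
  rw [Ideal.annihilator_span_singleton_eq_torsionOf] at h
  exact .of_equiv <|
    (Submodule.quotEquivOfEqBot _ h).symm ≪≫ₗ Ideal.quotTorsionOfEquivSpanSingleton R R g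

theorem Ideal.isPrincipal_of_free [Nontrivial R] (I : Ideal R) [Module.Free R I] :
    I.IsPrincipal :=
  (Submodule.rank_le_one_iff_isPrincipal I).mp <|
    (Submodule.rank_le I).trans_eq (Module.rank_self R)

theorem Ideal.isPrincipal_of_fg_of_flat [IsLocalRing R] {I : Ideal R} (hI : I.FG)
    [Module.Flat R I] : I.IsPrincipal :=
  have : Module.Finite R I := Module.Finite.iff_fg.mpr hI
  have := Module.free_of_flat_of_isLocalRing (R := R) (P := I)
  I.isPrincipal_of_free

theorem Ideal.flat_iff_forall_flat_map_atMaximal (I : Ideal R) :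
    Module.Flat R I ↔ ∀ (P : Ideal R) [P.IsMaximal],
      Module.Flat (Localization.AtPrime P) (I.map (algebraMap R (Localization.AtPrime P))) := by
  refine ⟨fun _ P _ ↦ .of_isLocalizedModule (R := R) _ P.primeCompl
    (Algebra.idealMap (S := Localization.AtPrime P) I), fun h ↦ ?_⟩
  refine Module.flat_of_isLocalized_maximal _ _ _
    (fun P _ ↦ Algebra.idealMap (S := Localization.AtPrime P) I) fun P _ ↦ ?_
  exact (Module.flat_iff_of_isLocalization (Localization.AtPrime P) P.primeCompl _).mp (h P)

end

theorem Ideal.IsSemiregular.annihilator_map_eq_bot {R : Type} [CommRing R] {I : Ideal R}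
    (hI : I.IsSemiregular) (M : Submonoid R) (S : Type*) [CommRing S] [Algebra R S]
    [IsLocalization M S] : (I.map (algebraMap R S)).annihilator = ⊥ := by
  obtain ⟨J, hJI, hJ, hann⟩ := hI
  exact le_bot_iff.mp <| (Submodule.annihilator_mono (Ideal.map_mono hJI)).trans
    (J.annihilator_map_eq_bot_of_fg M S hJ hann).le

/-- `R` is a strong Prüfer ring (every finitely generated semi-regular ideal is
locally principal) iff every finitely generated semi-regular ideal of `R` is flat. -/
theorem strongPrufer_iff_fg_semiregular_flat (R : Type) [CommRing R] :
    (∀ I : Ideal R, I.FG → I.IsSemiregular →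
      ∀ (𝔪 : Ideal R) (h𝔪 : 𝔪.IsMaximal),
        (I.map (algebraMap R (@Localization.AtPrime R _ 𝔪 h𝔪.isPrime))).IsPrincipal) ↔
      (∀ I : Ideal R, I.FG → I.IsSemiregular → Module.Flat R I) := by
  refine ⟨fun h I hI hsr ↦ ?_, fun h I hI hsr 𝔪 h𝔪 ↦ ?_⟩
  · refine I.flat_iff_forall_flat_map_atMaximal.mpr fun P hP ↦ ?_
    have := Ideal.free_of_isPrincipal_of_annihilator_eq_bot (h I hI hsr P hP)
      (hsr.annihilator_map_eq_bot P.primeCompl _)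
    infer_instance
  · have := I.flat_iff_forall_flat_map_atMaximal.mp (h I hI hsr) 𝔪
    exact Ideal.isPrincipal_of_fg_of_flat (hI.map _)
end

section
/- Let R be a commutative ring in which every h-divisible R-module is semi-regular coflat. Then every finitely generated semi-regular ideal of R is projective. -/
/-!
Write `I` as a quotient `p : F → I` of a free module with kernel `K`, and embed `K` into an
injective module `E`. The quotient `N = E ⧸ K` is h-divisible, so `Ext¹(R ⧸ I, N) = 0`;
computed on the resolution `⋯ → F → R → R ⧸ I`, this says that every map `F → N` vanishing
on `K` is `x ↦ p x • y` for some `y ∈ N`. Applied to the map induced by an extension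
`μ : F → E` of `K ⊆ E`, it gives `e ∈ E` such that `μ - p(·) • e` takes values in `K` and is
the identity on `K`: a retraction of `K ⊆ F`. Hence `I` is a direct summand of `F`.
-/

open CategoryTheory

noncomputable section

/-- A module is semi-regular coflat if `Ext¹(R/I, N) = 0` for every finitely generated
semi-regular ideal `I`. -/
def IsSemiregularCoflat (R : Type) [CommRing R] (N : Type) [AddCommGroup N] [Module R N] : Prop :=
  ∀ I : Ideal R, I.FG → I.IsSemiregular →
    Limits.IsZero (((Ext R (ModuleCat R) 1).obj
      (Opposite.op (ModuleCat.of R (R ⧸ I)))).obj (ModuleCat.of R N))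

open Category Limits

namespace CategoryTheory

variable {C : Type*} [Category C] [Abelian C] [EnoughProjectives C]

lemma Projective.d_comp {X Y : C} (f : X ⟶ Y) : Projective.d f ≫ f = 0 :=
  (assoc _ _ _).trans ((congrArg _ (kernel.condition f)).trans comp_zero)

namespace ProjectiveResolution

variable {Z N X₀ X₁ : C}

def presentationComplex (f : X₁ ⟶ X₀) : ChainComplex C ℕ :=
  ChainComplex.mk' X₀ X₁ f fun g => ⟨_, Projective.d g, Projective.d_comp g⟩

lemma presentationComplex_d_1_0 (f : X₁ ⟶ X₀) : (presentationComplex f).d 1 0 = f := by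
  simp [presentationComplex]

lemma presentationComplex_d_2_1 (f : X₁ ⟶ X₀) :
    (presentationComplex f).d 2 1 = Projective.d f := by
  simp [presentationComplex, ChainComplex.mk']

lemma presentationComplex_exactAt_succ (f : X₁ ⟶ X₀) (n : ℕ) :
    (presentationComplex f).ExactAt (n + 1) := by
  rw [HomologicalComplex.exactAt_iff' _ (n + 1 + 1) (n + 1) n (by simp) (by simp)]
  let d := (presentationComplex f).d (n + 1) n
  have e : ShortComplex.mk (Projective.d d) d (Projective.d_comp d) ≅
      (presentationComplex f).sc' (n + 1 + 1) (n + 1) n :=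
    ShortComplex.isoMk (ChainComplex.mk'XIso X₀ X₁ f
      (fun g => ⟨_, Projective.d g, Projective.d_comp g⟩) n).symm (Iso.refl _) (Iso.refl _)
      (((congrArg _ (ChainComplex.mk'_d _ _ _ _ n)).trans (Iso.inv_hom_id_assoc _ _)).trans
        (comp_id _).symm)
      ((id_comp _).trans (comp_id _).symm)
  exact ShortComplex.exact_of_iso e (exact_d_f d)

instance (f : X₁ ⟶ X₀) [Projective X₀] [Projective X₁] (n : ℕ) :
    Projective ((presentationComplex f).X n) :=
  match n with
  | 0 => inferInstanceAs (Projective X₀)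
  | 1 => inferInstanceAs (Projective X₁)
  | 2 => Projective.projective_over _
  | _ + 3 => Projective.projective_over _

def ofPresentation (f : X₁ ⟶ X₀) (g : X₀ ⟶ Z) [Projective X₀] [Projective X₁] [Epi g]
    (w : f ≫ g = 0) (hfg : (ShortComplex.mk f g w).Exact) : ProjectiveResolution Z where
  complex := presentationComplex f
  π := (ChainComplex.toSingle₀Equiv _ _).symm ⟨g, by rw [presentationComplex_d_1_0]; exact w⟩
  quasiIso := ⟨fun n => by
    cases n
    · rw [ChainComplex.quasiIsoAt₀_iff, ShortComplex.quasiIso_iff_of_zeros']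
      · refine (ShortComplex.exact_and_epi_g_iff_of_iso ?_).2 ⟨hfg, by dsimp; infer_instance⟩
        exact ShortComplex.isoMk (Iso.refl _) (Iso.refl _) (Iso.refl _)
          (by
            simp only [Iso.refl_hom, HomologicalComplex.shortComplexFunctor'_obj_f,
              presentationComplex_d_1_0]
            exact (id_comp f).trans (comp_id f).symm)
          (by
            simp only [ChainComplex.toSingle₀Equiv, Equiv.symm_mk, Equiv.coe_fn_mk, Iso.refl_hom,
              HomologicalComplex.shortComplexFunctor'_map_τ₂]
            erw [id_comp, comp_id, HomologicalComplex.mkHomToSingle_f]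
            simp only [ChainComplex.single₀_obj_zero, ChainComplex.single₀ObjXSelf,
              Iso.refl_inv]
            exact (comp_id g).symm)
      all_goals rfl
    · rw [quasiIsoAt_iff_exactAt']
      · apply presentationComplex_exactAt_succ
      · apply ChainComplex.exactAt_succ_single_obj⟩

variable {R : Type*} [Ring R] [Linear R C]

lemma exists_d_comp_eq_of_isZero_ext_one (P : ProjectiveResolution Z)
    (hz : IsZero (((Ext R C 1).obj (Opposite.op Z)).obj N)) (φ : P.complex.X 1 ⟶ N)
    (hφ : P.complex.d 2 1 ≫ φ = 0) :
    ∃ ψ : P.complex.X 0 ⟶ N, P.complex.d 1 0 ≫ ψ = φ := by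
  have hexact : ((P.complex.linearYonedaObj R N).sc' 0 1 2).Exact := by
    rw [← HomologicalComplex.exactAt_iff' _ 0 1 2 (by simp) (by simp),
      HomologicalComplex.exactAt_iff_isZero_homology]
    exact hz.of_iso (P.isoExt 1 N).symm
  rw [ShortComplex.moduleCat_exact_iff] at hexact
  exact hexact φ (by
    simp only [HomologicalComplex.shortComplexFunctor'_obj_g, ChainComplex.linearYonedaObj_d]
    exact hφ)

lemma exists_comp_eq_of_isZero_ext_one {f : X₁ ⟶ X₀} {g : X₀ ⟶ Z} [Projective X₀]
    [Projective X₁] [Epi g] (w : f ≫ g = 0) (hfg : (ShortComplex.mk f g w).Exact)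
    (hz : IsZero (((Ext R C 1).obj (Opposite.op Z)).obj N)) (φ : X₁ ⟶ N)
    (hφ : kernel.ι f ≫ φ = 0) : ∃ ψ : X₀ ⟶ N, f ≫ ψ = φ := by
  let P := ofPresentation f g w hfg
  have hd : P.complex.d 2 1 ≫ φ = 0 := by
    rw [show P.complex.d 2 1 = Projective.d f from presentationComplex_d_2_1 f]
    exact (assoc _ _ _).trans ((congrArg _ hφ).trans comp_zero)
  obtain ⟨ψ, hψ⟩ := exists_d_comp_eq_of_isZero_ext_one P hz φ hd
  rw [show P.complex.d 1 0 = f from presentationComplex_d_1_0 f] at hψ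
  exact ⟨ψ, hψ⟩

end ProjectiveResolution

end CategoryTheory

lemma LinearMap.exists_comp_eq_id_of_range_le {R K F E : Type*} [Semiring R] [AddCommMonoid K]
    [AddCommMonoid F] [AddCommMonoid E] [Module R K] [Module R F] [Module R E] (i : K →ₗ[R] F)
    {j : K →ₗ[R] E} (hj : Function.Injective j) (r : F →ₗ[R] E)
    (hr : LinearMap.range r ≤ LinearMap.range j) (hri : r ∘ₗ i = j) :
    ∃ ρ : F →ₗ[R] K, ρ ∘ₗ i = LinearMap.id := by
  refine ⟨(LinearEquiv.ofInjective j hj).symm ∘ₗ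
    r.codRestrict _ fun x => hr (mem_range_self r x), ?_⟩
  ext k
  change (LinearEquiv.ofInjective j hj).symm _ = k
  rw [LinearEquiv.symm_apply_eq]
  ext
  simp [← hri]

namespace Ideal

variable {R : Type} [CommRing R] (I : Ideal R)

lemma exists_smul_eq_of_isZero_ext_one {N F : Type} [AddCommGroup N] [Module R N]
    [AddCommGroup F] [Module R F] [Module.Projective R F]
    (hz : IsZero (((Ext R (ModuleCat R) 1).obj
      (Opposite.op (ModuleCat.of R (R ⧸ I)))).obj (ModuleCat.of R N)))
    {p : F →ₗ[R] I} (hp : Function.Surjective p) (φ : F →ₗ[R] N)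
    (hφ : LinearMap.ker p ≤ LinearMap.ker φ) : ∃ y : N, ∀ x, φ x = (p x : R) • y := by
  let f : ModuleCat.of R F ⟶ ModuleCat.of R R := ModuleCat.ofHom (I.subtype ∘ₗ p)
  let g : ModuleCat.of R R ⟶ ModuleCat.of R (R ⧸ I) := ModuleCat.ofHom I.mkQ
  have w : f ≫ g = 0 := by
    ext x
    exact (Submodule.Quotient.mk_eq_zero I).2 (p x).2
  have hfg : (ShortComplex.mk f g w).Exact := by
    rw [ShortComplex.moduleCat_exact_iff]
    intro x hx
    obtain ⟨y, hy⟩ := hp ⟨x, (Submodule.Quotient.mk_eq_zero I).1 hx⟩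
    exact ⟨y, congrArg Subtype.val hy⟩
  have : Epi g := (ModuleCat.epi_iff_surjective g).2 I.mkQ_surjective
  have : Projective (ModuleCat.of R R) := (IsProjective.iff_projective R).1 inferInstance
  have : Projective (ModuleCat.of R F) := (IsProjective.iff_projective F).1 inferInstance
  have hker : kernel.ι f ≫ ModuleCat.ofHom φ = 0 := by
    ext x
    exact hφ (Subtype.val_injective (ConcreteCategory.congr_hom (kernel.condition f) x))
  obtain ⟨ψ, hψ⟩ := ProjectiveResolution.exists_comp_eq_of_isZero_ext_one w hfg hz _ hker
  refine ⟨ψ 1, fun x => ?_⟩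
  rw [← map_smul, smul_eq_mul, mul_one]
  exact (ConcreteCategory.congr_hom hψ x).symm

lemma projective_of_forall_exists_smul_eq {F E : Type} [AddCommGroup F] [Module R F]
    [Module.Projective R F] [AddCommGroup E] [Module R E] [Module.Injective R E]
    {p : F →ₗ[R] I} (hp : Function.Surjective p) {j : LinearMap.ker p →ₗ[R] E}
    (hj : Function.Injective j)
    (hext : ∀ φ : F →ₗ[R] E ⧸ LinearMap.range j,
      LinearMap.ker p ≤ LinearMap.ker φ → ∃ y, ∀ x, φ x = (p x : R) • y) :
    Module.Projective R I := by
  obtain ⟨μ, hμ⟩ := Module.Injective.extension_property R E _ _ _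
    (LinearMap.ker p).injective_subtype j
  have hμj : ∀ k : LinearMap.ker p, μ k = j k := fun k => LinearMap.congr_fun hμ k
  obtain ⟨y, hy⟩ := hext ((LinearMap.range j).mkQ ∘ₗ μ) fun x hx => by
    simp [hμj ⟨x, hx⟩]
  obtain ⟨e, rfl⟩ := (LinearMap.range j).mkQ_surjective y
  let r := μ - (I.subtype ∘ₗ p).smulRight e
  have hr : LinearMap.range r ≤ LinearMap.range j := by
    rintro _ ⟨x, rfl⟩
    rw [← Submodule.Quotient.mk_eq_zero]
    simpa [r, sub_eq_zero] using hy x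
  have hri : r ∘ₗ (LinearMap.ker p).subtype = j := by
    ext k
    simp [r, hμj, LinearMap.mem_ker.1 k.2]
  obtain ⟨ρ, hρ⟩ := LinearMap.exists_comp_eq_id_of_range_le _ hj r hr hri
  have hexact := LinearMap.exact_subtype_ker_map p
  let s := (hexact.splitSurjectiveEquiv (LinearMap.ker p).injective_subtype).symm
    (hexact.splitInjectiveEquiv hp ⟨ρ, hρ⟩)
  exact Module.Projective.of_split s.1 p s.2

end Ideal

/-- If every h-divisible `R`-module (quotient of an injective module) is semi-regular
coflat, then every finitely generated semi-regular ideal of `R` is projective. -/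
theorem fg_semiregular_projective_of_hDivisible_coflat (R : Type) [CommRing R]
    (h : ∀ (N : Type) (_ : AddCommGroup N) (_ : Module R N),
      (∃ (E : ModuleCat R) (g : E →ₗ[R] N),
        Module.Injective R E ∧ Function.Surjective g) →
      IsSemiregularCoflat R N) :
    ∀ I : Ideal R, I.FG → I.IsSemiregular → Module.Projective R I := by
  intro I hIfg hIsr
  let p := Finsupp.linearCombination R (id : I → I)
  have hp : Function.Surjective p := Finsupp.linearCombination_id_surjective R I
  let K := ModuleCat.of R (LinearMap.ker p)
  let E := Injective.under K
  let j := (Injective.ι K).hom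
  have hEinj : Module.Injective R E := by
    rw [Module.injective_iff_injective_object, ModuleCat.of_coe]
    infer_instance
  have hj : Function.Injective j := (ModuleCat.mono_iff_injective _).1 inferInstance
  refine I.projective_of_forall_exists_smul_eq hp hj fun φ hφ =>
    I.exists_smul_eq_of_isZero_ext_one ?_ hp φ hφ
  -- `E` lives in `Type`, the injective modules quantified over in `h` in an arbitrary universe.
  exact h _ _ _ ⟨ModuleCat.of R (ULift E),
    (LinearMap.range j).mkQ ∘ₗ ULift.moduleEquiv.toLinearMap,
    Module.ulift_injective_of_injective R hEinj,
    (LinearMap.range j).mkQ_surjective.comp ULift.moduleEquiv.surjective⟩ I hIfg hIsr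
end
end
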